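/- Let K be the subgroup of Graphs(n+1) consisting of graphs with all degrees even and an even number of edges, for n ≥ 2. Then K is the normal closure in D_n (the subgroup of Graphs(n+1) ⋊ S_{n+1} generated by the x_m) of the elements (x_i x_j x_i x_k)² for distinct i, j, k; equivalently, K × {id} equals the kernel of the projection D_n → S_{n+1}. -/

import Mathlib

open Equiv Finset

abbrev Vtx (n : ℕ) := Fin (n+1)
abbrev Edge (n : ℕ) := {e : Sym2 (Vtx n) // ¬ e.IsDiag}
abbrev Graphs (n : ℕ) := Edge n → ZMod 2

/-- relabelling of edges by a permutation of vertices -/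
def permEdge {n : ℕ} (σ : Perm (Vtx n)) : Edge n ≃ Edge n where
  toFun e := ⟨Sym2.map σ e.1, by
    simpa [Sym2.isDiag_map σ.injective] using e.2⟩
  invFun e := ⟨Sym2.map σ.symm e.1, by
    simpa [Sym2.isDiag_map σ.symm.injective] using e.2⟩
  left_inv e := by
    ext1
    simp [Sym2.map_map]
  right_inv e := by
    ext1
    simp [Sym2.map_map]

/-- action of a vertex permutation on graphs -/
def gact {n : ℕ} (σ : Perm (Vtx n)) : Graphs n ≃+ Graphs n where
  toFun g := fun e => g ((permEdge σ).symm e)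
  invFun g := fun e => g (permEdge σ e)
  left_inv g := by funext e; simp
  right_inv g := by funext e; simp
  map_add' g h := rfl

lemma gact_mul {n : ℕ} (σ τ : Perm (Vtx n)) (g : Graphs n) :
    gact (σ * τ) g = gact σ (gact τ g) := by
  funext e
  simp only [gact, AddEquiv.coe_mk, Equiv.coe_fn_mk, Equiv.symm]
  congr 1
  ext1
  simp [permEdge, Sym2.map_map]
  rfl

/-- the action as a homomorphism to automorphisms, multiplicatively -/
def φn (n : ℕ) : Perm (Vtx n) →* MulAut (Multiplicative (Graphs n)) where
  toFun σ := AddEquiv.toMultiplicative (gact σ)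
  map_one' := by
    ext g
    simp [gact, permEdge, Equiv.Perm.one_symm, Equiv.Perm.coe_one, Sym2.map_id']
  map_mul' σ τ := by
    ext g
    exact congrFun (gact_mul σ τ g.toAdd) _

/-- the ambient group `Graphs(n+1) ⋊ S_{n+1}` -/
abbrev DG (n : ℕ) := SemidirectProduct (Multiplicative (Graphs n)) (Perm (Vtx n)) (φn n)

/-- the single-edge graph with edge `{u,v}` -/
def single {n : ℕ} (u v : Vtx n) : Graphs n :=
  fun e => if e.1 = s(u, v) then 1 else 0

/-- the generator `x_m = (e_{0m}, (0 m))` -/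
def xgen {n : ℕ} (m : Vtx n) : DG n :=
  ⟨Multiplicative.ofAdd (single 0 m), Equiv.swap 0 m⟩

/-- the degree of a vertex in a graph -/
def deg {n : ℕ} (g : Graphs n) (v : Vtx n) : ℕ :=
  (Finset.univ.filter (fun e : Edge n => v ∈ e.1 ∧ g e = 1)).card

/-- the number of edges of a graph -/
def nedges {n : ℕ} (g : Graphs n) : ℕ :=
  (Finset.univ.filter (fun e : Edge n => g e = 1)).card

/-- all degrees even and an even number of edges -/
def evenGraph {n : ℕ} (g : Graphs n) : Prop :=
  (∀ v : Vtx n, Even (deg g v)) ∧ Even (nedges g)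

/-- the subgroup generated by the `x_m`, `m = 1, …, n` -/
def Dn (n : ℕ) : Subgroup (DG n) :=
  Subgroup.closure {x | ∃ m : Vtx n, m ≠ 0 ∧ x = xgen m}

/-- the complete graph -/
def complete (n : ℕ) : Graphs n := fun _ => 1

/-!
The map `(g, σ) ↦ (-1) ^ |E(g)| * sgn σ` is a character of `Graphs(n+1) ⋊ S_{n+1}` killing every
`x_m`, and the affine action `(g, σ) • f = deg g + f ∘ σ⁻¹` on vertex labellings mod 2 has every
`x_m` fixing the indicator of `0`. Hence an element `(g, 1)` of `D_n` has an even number of edges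
and only even degrees.

Conversely, let `T(a, b)` be the triangle on `0, a, b`. Since
`(x_i x_j x_i x_k)² = T(k, i) + T(k, j)`, every sum `T(e) + T(f)` over edges `e, f` avoiding `0`
lies in `D_n`. If all degrees of `g` are even, then `g = ∑_{e ∌ 0} g(e) T(e)`, and the coefficients
sum to `|E(g)| - deg g 0`, which is even when `g` has an even number of edges; a combination with
coefficient sum zero is a combination of differences.
-/

open SemidirectProduct Multiplicative

variable {n : ℕ}

lemma ZMod.natCast_card_filter_eq_one {ι : Type*} (s : Finset ι) (f : ι → ZMod 2) :
    (#{x ∈ s | f x = 1} : ZMod 2) = ∑ x ∈ s, f x := by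
  rw [Finset.natCast_card_filter]
  exact Finset.sum_congr rfl fun x _ => (by decide : ∀ a : ZMod 2, (if a = 1 then 1 else 0) = a) _

lemma ZMod.neg_one_uzpow_eq_one_iff (a : ZMod 2) : (-1 : ℤˣ) ^ a = 1 ↔ a = 0 := by
  revert a
  decide

lemma Submodule.sum_smul_mem_of_sum_eq_zero {R M ι : Type*} [Ring R] [AddCommGroup M]
    [Module R M] (p : Submodule R M) {s : Finset ι} {c : ι → R} {v : ι → M}
    (hc : ∑ i ∈ s, c i = 0) (hv : ∀ i ∈ s, ∀ j ∈ s, v i - v j ∈ p) : ∑ i ∈ s, c i • v i ∈ p := by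
  rcases s.eq_empty_or_nonempty with rfl | ⟨j, hj⟩
  · simp
  · have : ∑ i ∈ s, c i • v i = ∑ i ∈ s, c i • (v i - v j) := by
      simp [smul_sub, Finset.sum_sub_distrib, ← Finset.sum_smul, hc]
    rw [this]
    exact p.sum_mem fun i hi => p.smul_mem _ (hv i hi j hj)

lemma single_comm (u v : Vtx n) : single u v = single v u := by
  funext e
  simp [single, Sym2.eq_swap]

lemma single_eq_pi_single {u v : Vtx n} (h : u ≠ v) :
    single u v = Pi.single ⟨s(u, v), by simpa⟩ 1 := by
  funext e
  simp [single, Pi.single_apply, Subtype.ext_iff]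

lemma gact_single (σ : Perm (Vtx n)) (u v : Vtx n) :
    gact σ (single u v) = single (σ u) (σ v) := by
  funext e
  have : s(u, v) = Sym2.map σ.symm s(σ u, σ v) := by simp
  simp only [gact, permEdge, single, AddEquiv.coe_mk, Equiv.coe_fn_mk, Equiv.coe_fn_symm_mk, this,
    (Sym2.map.injective σ.symm.injective).eq_iff]

lemma toAdd_mul_left (p q : DG n) :
    (p * q).left.toAdd = p.left.toAdd + gact p.right q.left.toAdd := rfl

def degParity : Graphs n →+ (Vtx n → ZMod 2) where
  toFun g v := ∑ e with v ∈ e.1, g e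
  map_zero' := by ext; simp
  map_add' g h := by ext; simp [Finset.sum_add_distrib]

def edgeParity : Graphs n →+ ZMod 2 where
  toFun g := ∑ e, g e
  map_zero' := by simp
  map_add' g h := by simp [Finset.sum_add_distrib]

lemma degParity_apply (g : Graphs n) (v : Vtx n) : degParity g v = ∑ e with v ∈ e.1, g e := rfl

lemma edgeParity_apply (g : Graphs n) : edgeParity g = ∑ e, g e := rfl

lemma evenGraph_iff (g : Graphs n) : evenGraph g ↔ degParity g = 0 ∧ edgeParity g = 0 := by
  simp only [evenGraph, deg, nedges, funext_iff, ← ZMod.natCast_eq_zero_iff_even,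
    ← Finset.filter_filter, ZMod.natCast_card_filter_eq_one, degParity_apply, edgeParity_apply,
    Pi.zero_apply]

lemma degParity_gact (σ : Perm (Vtx n)) (g : Graphs n) (v : Vtx n) :
    degParity (gact σ g) v = degParity g (σ⁻¹ v) := by
  rw [degParity_apply, degParity_apply]
  refine Finset.sum_equiv (permEdge σ).symm (fun e => ?_) fun e _ => rfl
  simp [permEdge, Sym2.mem_map]

lemma edgeParity_gact (σ : Perm (Vtx n)) (g : Graphs n) : edgeParity (gact σ g) = edgeParity g :=
  Equiv.sum_comp (permEdge σ).symm g

lemma degParity_single {u v : Vtx n} (h : u ≠ v) :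
    degParity (single u v) = Pi.single u 1 + Pi.single v 1 := by
  ext w
  rw [degParity_apply, single_eq_pi_single h, Finset.sum_pi_single']
  simp only [Finset.mem_filter, Finset.mem_univ, true_and, Sym2.mem_iff, Pi.add_apply,
    Pi.single_apply]
  split_ifs <;> simp_all

lemma edgeParity_single {u v : Vtx n} (h : u ≠ v) : edgeParity (single u v) = 1 := by
  simp [edgeParity_apply, single_eq_pi_single h]

instance : MulAction (DG n) (Vtx n → ZMod 2) where
  smul p f := degParity p.left.toAdd + fun v => f (p.right⁻¹ v)
  one_smul f := by ext v; show degParity 0 v + f v = f v; simp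
  mul_smul p q f := by
    ext v
    show degParity (p * q).left.toAdd v + f ((p.right * q.right)⁻¹ v) =
      degParity p.left.toAdd v +
        (degParity q.left.toAdd (p.right⁻¹ v) + f (q.right⁻¹ (p.right⁻¹ v)))
    rw [toAdd_mul_left, map_add, Pi.add_apply, degParity_gact, mul_inv_rev, Perm.mul_apply,
      add_assoc]

lemma DG.smul_def (p : DG n) (f : Vtx n → ZMod 2) :
    p • f = degParity p.left.toAdd + fun v => f (p.right⁻¹ v) := rfl

lemma xgen_smul_single_zero {m : Vtx n} (hm : m ≠ 0) :
    xgen m • (Pi.single 0 1 : Vtx n → ZMod 2) = Pi.single 0 1 := by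
  have : (fun v => (Pi.single 0 1 : Vtx n → ZMod 2) ((swap 0 m)⁻¹ v)) = Pi.single m 1 := by
    ext v; simp [Pi.single_apply, swap_apply_eq_iff]
  rw [DG.smul_def, xgen, toAdd_ofAdd, degParity_single hm.symm, this, add_assoc,
    ZModModule.add_self, add_zero]

lemma Dn_le_stabilizer : Dn n ≤ MulAction.stabilizer (DG n) (Pi.single 0 1 : Vtx n → ZMod 2) :=
  (Subgroup.closure_le _).2 fun _ ⟨_, hm, hx⟩ => hx ▸ xgen_smul_single_zero hm

lemma degParity_eq_zero_of_inl_mem_Dn {g : Graphs n} (h : inl (ofAdd g) ∈ Dn n) :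
    degParity g = 0 := by
  have := Dn_le_stabilizer h
  rw [MulAction.mem_stabilizer_iff, DG.smul_def, right_inl, inv_one] at this
  exact add_eq_right.mp this

def edgeSign (n : ℕ) : Multiplicative (Graphs n) →* ℤˣ where
  toFun g := (-1) ^ edgeParity g.toAdd
  map_one' := by simp
  map_mul' g h := by simp [uzpow_add]

def totalSign (n : ℕ) : DG n →* ℤˣ :=
  SemidirectProduct.lift (edgeSign n) Perm.sign fun σ => by
    refine MonoidHom.ext fun g => ?_
    simp only [edgeSign, φn, MonoidHom.coe_comp, MonoidHom.coe_mk, OneHom.coe_mk,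
      Function.comp_apply, MulEquiv.coe_toMonoidHom, MulAut.conj_apply, Int.units_inv_eq_self]
    rw [mul_right_comm, Int.units_mul_self, one_mul]
    exact congrArg _ (edgeParity_gact σ g.toAdd)

lemma Dn_le_ker_totalSign : Dn n ≤ (totalSign n).ker := by
  refine (Subgroup.closure_le _).2 ?_
  rintro _ ⟨m, hm, rfl⟩
  show (-1) ^ edgeParity (single 0 m) * Perm.sign (swap 0 m) = 1
  rw [edgeParity_single hm.symm, Perm.sign_swap hm.symm]
  decide

lemma edgeParity_eq_zero_of_inl_mem_Dn {g : Graphs n} (h : inl (ofAdd g) ∈ Dn n) :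
    edgeParity g = 0 := by
  have : (-1 : ℤˣ) ^ edgeParity g = 1 := by simpa [totalSign, edgeSign] using Dn_le_ker_totalSign h
  exact (ZMod.neg_one_uzpow_eq_one_iff _).1 this

def triangle (a b : Vtx n) : Graphs n := single 0 a + single a b + single 0 b

lemma triangle_comm (a b : Vtx n) : triangle a b = triangle b a := by
  rw [triangle, triangle, single_comm a b]
  abel

def kernelGraphs (n : ℕ) : AddSubgroup (Graphs n) := ((Dn n).comap inl).toAddSubgroup'

lemma mem_kernelGraphs {g : Graphs n} : g ∈ kernelGraphs n ↔ inl (ofAdd g) ∈ Dn n := Iff.rfl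

lemma xgen_mem_Dn {m : Vtx n} (hm : m ≠ 0) : xgen m ∈ Dn n :=
  Subgroup.subset_closure ⟨m, hm, rfl⟩

lemma xgen_mul_xgen_mul_xgen {i j : Vtx n} (hi : i ≠ 0) (hj : j ≠ 0) (hij : i ≠ j) :
    xgen i * xgen j * xgen i = ⟨ofAdd (triangle i j), swap i j⟩ := by
  refine SemidirectProduct.ext (toAdd.injective ?_) ?_
  · simp only [toAdd_mul_left, mul_right, xgen, toAdd_ofAdd, gact_single, Perm.mul_apply,
      swap_apply_def, hi, hj, hij, hij.symm, if_true, if_false, triangle, single_comm j 0]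
  · show swap 0 i * swap 0 j * swap 0 i = swap i j
    rw [swap_comm 0 j, swap_mul_swap_mul_swap hj hij.symm]

lemma xgen_mul_xgen_mul_xgen_mul_xgen_sq {i j k : Vtx n} (hi : i ≠ 0) (hj : j ≠ 0) (hk : k ≠ 0)
    (hij : i ≠ j) (hik : i ≠ k) (hjk : j ≠ k) :
    (xgen i * xgen j * xgen i * xgen k) ^ 2 = inl (ofAdd (triangle k i + triangle k j)) := by
  rw [xgen_mul_xgen_mul_xgen hi hj hij, sq]
  refine SemidirectProduct.ext (toAdd.injective ?_) ?_
  · simp only [toAdd_mul_left, mul_right, xgen, toAdd_ofAdd, left_inl, map_add, gact_single,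
      Perm.mul_apply, swap_apply_def, hi, hj, hk, hij, hik, hjk, hi.symm, hj.symm, hk.symm,
      hij.symm, hik.symm, hjk.symm, if_true, if_false, triangle, single_comm j i, single_comm k i,
      single_comm k j]
    rw [single_comm k 0]
    abel_nf
    simp only [two_zsmul, ZModModule.add_self, zero_add]
  · show swap i j * swap 0 k * (swap i j * swap 0 k) = 1
    have hdisj : (swap 0 k).Disjoint (swap i j) :=
      Perm.disjoint_swap_swap (by simp [hi.symm, hj.symm, hk.symm, hij, hik.symm, hjk.symm])
    rw [hdisj.commute.mul_mul_mul_comm, swap_mul_self, swap_mul_self, one_mul]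

lemma triangle_add_triangle_mem_of_left_eq {a b c : Vtx n} (ha : a ≠ 0) (hb : b ≠ 0) (hc : c ≠ 0)
    (hab : a ≠ b) (hac : a ≠ c) : triangle a b + triangle a c ∈ kernelGraphs n := by
  by_cases hbc : b = c
  · rw [hbc, ZModModule.add_self]
    exact zero_mem _
  · have hw : xgen b * xgen c * xgen b * xgen a ∈ Dn n := mul_mem (mul_mem (mul_mem
      (xgen_mem_Dn hb) (xgen_mem_Dn hc)) (xgen_mem_Dn hb)) (xgen_mem_Dn ha)
    have := pow_mem hw 2
    rw [xgen_mul_xgen_mul_xgen_mul_xgen_sq hb hc ha hbc hab.symm hac.symm] at this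
    exact mem_kernelGraphs.2 this

lemma triangle_add_triangle_mem {a b c d : Vtx n} (ha : a ≠ 0) (hb : b ≠ 0) (hc : c ≠ 0)
    (hd : d ≠ 0) (hab : a ≠ b) (hcd : c ≠ d) : triangle a b + triangle c d ∈ kernelGraphs n := by
  by_cases hac : a = c
  · subst hac
    exact triangle_add_triangle_mem_of_left_eq ha hb hd hab hcd
  · have := add_mem (triangle_add_triangle_mem_of_left_eq ha hb hc hab hac)
      (triangle_add_triangle_mem_of_left_eq hc ha hd (Ne.symm hac) hcd)
    rwa [triangle_comm c a, add_assoc, ← add_assoc (triangle a c), ZModModule.add_self,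
      zero_add] at this

def edgeTriangle : Sym2 (Vtx n) → Graphs n := Sym2.lift ⟨triangle, triangle_comm⟩

lemma edgeTriangle_add_mem {e f : Sym2 (Vtx n)} (he : ¬e.IsDiag) (hf : ¬f.IsDiag) (he0 : 0 ∉ e)
    (hf0 : 0 ∉ f) : edgeTriangle e + edgeTriangle f ∈ kernelGraphs n := by
  induction e, f using Sym2.inductionOn₂ with
  | _ a b c d =>
    simp only [Sym2.mk_isDiag_iff, Sym2.mem_iff, not_or] at he hf he0 hf0
    exact triangle_add_triangle_mem (Ne.symm he0.1) (Ne.symm he0.2) (Ne.symm hf0.1)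
      (Ne.symm hf0.2) he hf

lemma edgeTriangle_apply_of_zero_notMem (e : Sym2 (Vtx n)) {f : Edge n} (hf : 0 ∉ f.1) :
    edgeTriangle e f = if f.1 = e then 1 else 0 := by
  induction e using Sym2.ind with
  | _ a b =>
    have h0 : ∀ v, f.1 ≠ s(0, v) := fun v h => hf (h ▸ Sym2.mem_mk_left 0 v)
    simp [edgeTriangle, triangle, single, h0]

lemma edgeTriangle_apply_of_eq_mk_zero {e : Sym2 (Vtx n)} {f : Edge n} {c : Vtx n}
    (he : ¬e.IsDiag) (he0 : 0 ∉ e) (hf : f.1 = s(0, c)) :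
    edgeTriangle e f = if c ∈ e then 1 else 0 := by
  induction e using Sym2.ind with
  | _ a b =>
    simp only [Sym2.mk_isDiag_iff, Sym2.mem_iff, not_or] at he he0
    simp only [edgeTriangle, Sym2.lift_mk, triangle, Pi.add_apply, single, hf, Sym2.eq,
      Sym2.rel_iff', Prod.mk.injEq, true_and, Prod.swap_prod_mk, Sym2.mem_iff]
    split_ifs <;> simp_all

lemma eq_sum_smul_edgeTriangle {g : Graphs n} (hg : degParity g = 0) :
    g = ∑ e with 0 ∉ e.1, g e • edgeTriangle e.1 := by
  funext f
  simp only [Finset.sum_apply, Pi.smul_apply, smul_eq_mul]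
  by_cases hf : 0 ∈ f.1
  · obtain ⟨c, hc⟩ : ∃ c, f.1 = s(0, c) := ⟨Sym2.Mem.other hf, (Sym2.other_spec hf).symm⟩
    have hc0 : (0 : Vtx n) ≠ c := by rintro rfl; exact f.2 (hc ▸ Sym2.mk_isDiag_iff.2 rfl)
    have hfilter : ({e | c ∈ e.1 ∧ 0 ∈ e.1} : Finset (Edge n)) = {f} := by
      ext e
      simp only [Finset.mem_filter, Finset.mem_univ, true_and, Finset.mem_singleton]
      rw [and_comm, Sym2.mem_and_mem_iff hc0, ← hc, Subtype.ext_iff]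
    -- `deg g c` is even: the edge `f` at `c` is balanced by the edges at `c` avoiding `0`
    have hsplit := Finset.sum_filter_add_sum_filter_not {e | c ∈ e.1} (fun e : Edge n => 0 ∈ e.1) g
    rw [Finset.filter_filter, Finset.filter_filter, hfilter, Finset.sum_singleton,
      ← degParity_apply, hg, Pi.zero_apply, CharTwo.add_eq_zero] at hsplit
    rw [hsplit, Finset.sum_filter, Finset.sum_filter]
    refine Finset.sum_congr rfl fun e _ => ?_
    by_cases he : 0 ∈ e.1
    · simp [he]
    · rw [edgeTriangle_apply_of_eq_mk_zero e.2 he hc]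
      simp [he]
  · rw [Finset.sum_eq_single_of_mem f (by simpa using hf) fun e he hef => ?_]
    · rw [edgeTriangle_apply_of_zero_notMem _ hf, if_pos rfl, mul_one]
    · rw [edgeTriangle_apply_of_zero_notMem _ hf,
        if_neg fun h => hef (Subtype.ext h.symm), mul_zero]

lemma sum_filter_zero_notMem_eq_zero_of_evenGraph {g : Graphs n} (hg : evenGraph g) :
    ∑ e with 0 ∉ e.1, g e = 0 := by
  rw [evenGraph_iff] at hg
  have := Finset.sum_filter_add_sum_filter_not Finset.univ (fun e : Edge n => 0 ∈ e.1) g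
  rw [← degParity_apply, ← edgeParity_apply, hg.1, hg.2, Pi.zero_apply, zero_add] at this
  exact this

lemma mem_kernelGraphs_of_evenGraph {g : Graphs n} (hg : evenGraph g) : g ∈ kernelGraphs n := by
  rw [eq_sum_smul_edgeTriangle ((evenGraph_iff g).1 hg).1]
  refine (kernelGraphs n).toZModSubmodule 2 |>.sum_smul_mem_of_sum_eq_zero
    (sum_filter_zero_notMem_eq_zero_of_evenGraph hg) fun e he f hf => ?_
  rw [AddSubgroup.mem_toZModSubmodule, ZModModule.sub_eq_add]
  simp only [Finset.mem_filter, Finset.mem_univ, true_and] at he hf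
  exact edgeTriangle_add_mem e.2 f.2 he hf

lemma inl_mem_Dn_iff (g : Graphs n) : inl (ofAdd g) ∈ Dn n ↔ evenGraph g :=
  ⟨fun h => (evenGraph_iff g).2
      ⟨degParity_eq_zero_of_inl_mem_Dn h, edgeParity_eq_zero_of_inl_mem_Dn h⟩,
    fun h => mem_kernelGraphs.1 (mem_kernelGraphs_of_evenGraph h)⟩

theorem stmt9_general (n : ℕ) (p : DG n) :
    (p ∈ Dn n ∧ p.right = 1) ↔
      (evenGraph (Multiplicative.toAdd p.left) ∧ p.right = 1) := by
  refine and_congr_left fun hp => ?_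
  have : p = inl p.left := SemidirectProduct.ext rfl hp
  rw [← inl_mem_Dn_iff, ofAdd_toAdd, ← this]

/-- For `n ≥ 2`, `K × {id}` equals the kernel of the projection `D_n → S_{n+1}`:
an element of `Graphs(n+1) ⋊ S_{n+1}` lies in `D_n` with trivial permutation part
if and only if its permutation part is trivial and its graph part has all degrees
even and an even number of edges. -/
theorem stmt9 (n : ℕ) (hn : 2 ≤ n) (p : DG n) :
    (p ∈ Dn n ∧ p.right = 1) ↔
      (evenGraph (Multiplicative.toAdd p.left) ∧ p.right = 1) :=
  stmt9_general n p
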